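/- arXiv:2005.06789 — 2 statements merged into one kernel-verified Lean document; each statement's English description precedes it below -/
import Mathlib

section
/- (Helly-type convergence) Let (Y^n)_{n≥0} and (K^n)_{n≥0} be sequences of continuous functions on [0,T] with each K^n nondecreasing, K^n(0)=0, converging uniformly on [0,T] to continuous functions Y and K respectively (K nondecreasing). Let L : [0,T] → ℝ be continuous with Y^n ≥ L and ∫_0^T (Y^n(s) − L(s)) dK^n(s) = 0 for all n. Then Y ≥ L and ∫_0^T (Y(s) − L(s)) dK(s) = 0. -/
/-!
Since `Y n ≥ L` pointwise, the limit inequality is immediate. For the integral, put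
`f := Ylim - L`. On the one hand `∫ f dK n → ∫ f dKlim`: approximating `∫ f dG` by the
Riemann–Stieltjes sums `∑ f (t j) (G (t (j+1)) - G (t j))` of a fine partition makes the error
uniformly small, and for a fixed partition these sums converge because `K n → Klim` pointwise.
On the other hand `|∫ f dK n| = |∫ (f - (Y n - L)) dK n| ≤ ‖Ylim - Y n‖_∞ · K n([0,T]) → 0`,
because the masses `K n([0,T])` stay bounded.
-/

open MeasureTheory Set Filter Topology

lemma tendsto_of_forall_eventually_dist_le_mul {ι α : Type*} [PseudoMetricSpace α]
    {l : Filter ι} {x : ι → α} {x₀ : α} {c : ι → ℝ} (hc : IsBoundedUnder (· ≤ ·) l c)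
    (h : ∀ ε > 0, ∀ᶠ i in l, dist (x i) x₀ ≤ ε * c i) : Tendsto x l (𝓝 x₀) := by
  obtain ⟨C, hC⟩ := hc
  rw [Metric.tendsto_nhds]
  intro η hη
  filter_upwards [h (η / (2 * (|C| + 1))) (by positivity), hC] with i hi hCi
  calc dist (x i) x₀ ≤ η / (2 * (|C| + 1)) * c i := hi
    _ ≤ η / (2 * (|C| + 1)) * (|C| + 1) := by
      gcongr; linarith [le_abs_self C, show c i ≤ C from hCi]
    _ < η := by field_simp; linarith

lemma tendsto_setIntegral_sub_of_tendstoUniformlyOn {ι α E : Type*} [MeasurableSpace α]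
    [NormedAddCommGroup E] [NormedSpace ℝ E] {l : Filter ι} {μ : ι → Measure α} {s : Set α}
    {F : ι → α → E} {f : α → E} (hF : TendstoUniformlyOn F f l s)
    (hFi : ∀ i, IntegrableOn (F i) s (μ i)) (hfi : ∀ i, IntegrableOn f s (μ i))
    (hμ : ∀ i, μ i s < ⊤) (hμb : IsBoundedUnder (· ≤ ·) l fun i => (μ i).real s) :
    Tendsto (fun i => ∫ x in s, F i x ∂μ i - ∫ x in s, f x ∂μ i) l (𝓝 0) := by
  refine tendsto_of_forall_eventually_dist_le_mul hμb fun ε hε => ?_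
  filter_upwards [Metric.tendstoUniformlyOn_iff.1 hF ε hε] with i hi
  rw [dist_zero_right, ← integral_sub (hFi i) (hfi i)]
  refine norm_setIntegral_le_of_norm_le_const (hμ i) fun x hx => ?_
  rw [← dist_eq_norm, dist_comm]
  exact (hi x hx).le

lemma exists_partition_abs_sub_le {f : ℝ → ℝ} {a b : ℝ} (hab : a ≤ b)
    (hf : ContinuousOn f (Icc a b)) {ε : ℝ} (hε : 0 < ε) :
    ∃ (m : ℕ) (t : ℕ → ℝ), Monotone t ∧ t 0 = a ∧ t m = b ∧
      ∀ j < m, ∀ x ∈ Ioc (t j) (t (j + 1)), |f x - f (t j)| ≤ ε := by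
  obtain ⟨δ, hδ, hfδ⟩ := Metric.uniformContinuousOn_iff.1
    (isCompact_Icc.uniformContinuousOn_of_continuous hf) ε hε
  obtain ⟨m, hm⟩ := exists_nat_gt ((b - a) / δ)
  have hm₀ : (0 : ℝ) < m := lt_of_le_of_lt (div_nonneg (sub_nonneg.2 hab) hδ.le) hm
  have hmesh : (b - a) / m < δ := by
    rw [div_lt_iff₀ hm₀]; rw [div_lt_iff₀ hδ] at hm; linarith
  set t : ℕ → ℝ := fun j => a + j * ((b - a) / m)
  have ht : Monotone t := fun i j hij => by
    have : (i : ℝ) ≤ j := by exact_mod_cast hij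
    simp only [t]; gcongr
  refine ⟨m, t, ht, by simp [t], by simp only [t]; field_simp; ring, fun j hj x hx => ?_⟩
  have htj : t j ∈ Icc a b := ⟨by simpa [t] using ht (Nat.zero_le j), by
    simpa [t, mul_div_cancel₀ _ hm₀.ne'] using ht hj.le⟩
  have htj₁ : t (j + 1) ≤ b := by simpa [t, mul_div_cancel₀ _ hm₀.ne'] using ht hj
  have hdist : dist x (t j) < δ := by
    rw [Real.dist_eq, abs_of_pos (sub_pos.2 hx.1)]
    have : t (j + 1) - t j = (b - a) / m := by simp only [t]; push_cast; ring
    linarith [hx.2]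
  rw [← Real.dist_eq]
  exact (hfδ x ⟨htj.1.trans hx.1.le, hx.2.trans htj₁⟩ (t j) htj hdist).le

def riemannStieltjesSum (f G : ℝ → ℝ) (t : ℕ → ℝ) (m : ℕ) : ℝ :=
  ∑ j ∈ Finset.range m, f (t j) * (G (t (j + 1)) - G (t j))

namespace StieltjesFunction

variable (G : StieltjesFunction ℝ)

lemma measure_singleton_of_continuousAt {a : ℝ} (hG : ContinuousAt G a) : G.measure {a} = 0 := by
  rw [measure_singleton, hG.continuousWithinAt.leftLim_eq, sub_self, ENNReal.ofReal_zero]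

lemma measureReal_Ioc_of_le {a b : ℝ} (hab : a ≤ b) : G.measure.real (Ioc a b) = G b - G a := by
  rw [measureReal_def, measure_Ioc, ENNReal.toReal_ofReal (sub_nonneg.2 (G.mono hab))]

lemma measureReal_Icc_of_continuousAt {a b : ℝ} (hab : a ≤ b) (hG : ContinuousAt G a) :
    G.measure.real (Icc a b) = G b - G a := by
  rw [measureReal_def, measure_Icc, hG.continuousWithinAt.leftLim_eq,
    ENNReal.toReal_ofReal (sub_nonneg.2 (G.mono hab))]

lemma abs_setIntegral_Ioc_sub_mul_le {f : ℝ → ℝ} {a b c ε : ℝ} (hab : a ≤ b)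
    (hf : IntegrableOn f (Ioc a b) G.measure) (hfc : ∀ x ∈ Ioc a b, |f x - c| ≤ ε) :
    |∫ x in Ioc a b, f x ∂G.measure - c * (G b - G a)| ≤ ε * (G b - G a) := by
  have hconst : c * (G b - G a) = ∫ _ in Ioc a b, c ∂G.measure := by
    rw [setIntegral_const, G.measureReal_Ioc_of_le hab, smul_eq_mul, mul_comm]
  rw [hconst, ← integral_sub hf (integrableOn_const measure_Ioc_lt_top.ne),
    ← G.measureReal_Ioc_of_le hab]
  exact norm_setIntegral_le_of_norm_le_const (f := fun x => f x - c) measure_Ioc_lt_top hfc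

lemma abs_setIntegral_Ioc_sub_riemannStieltjesSum_le {f : ℝ → ℝ} (hf : Continuous f)
    {t : ℕ → ℝ} (ht : Monotone t) {m : ℕ} {ε : ℝ}
    (hosc : ∀ j < m, ∀ x ∈ Ioc (t j) (t (j + 1)), |f x - f (t j)| ≤ ε) :
    |∫ x in Ioc (t 0) (t m), f x ∂G.measure - riemannStieltjesSum f G t m|
      ≤ ε * (G (t m) - G (t 0)) := by
  have hsplit : ∫ x in Ioc (t 0) (t m), f x ∂G.measure
      = ∑ j ∈ Finset.range m, ∫ x in Ioc (t j) (t (j + 1)), f x ∂G.measure := by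
    rw [← intervalIntegral.integral_of_le (ht (Nat.zero_le m)),
      ← intervalIntegral.sum_integral_adjacent_intervals fun j _ => hf.intervalIntegrable _ _]
    exact Finset.sum_congr rfl fun j _ => intervalIntegral.integral_of_le (ht j.le_succ)
  rw [hsplit, riemannStieltjesSum, ← Finset.sum_sub_distrib,
    ← Finset.sum_range_sub (fun j => G (t j)), Finset.mul_sum]
  refine (Finset.abs_sum_le_sum_abs _ _).trans (Finset.sum_le_sum fun j hj => ?_)
  exact G.abs_setIntegral_Ioc_sub_mul_le (ht j.le_succ) hf.integrableOn_Ioc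
    (hosc j (Finset.mem_range.1 hj))

theorem tendsto_setIntegral_Ioc_of_tendsto {f : ℝ → ℝ} (hf : Continuous f) {a b : ℝ}
    {G : ℕ → StieltjesFunction ℝ} {G₀ : StieltjesFunction ℝ}
    (hG : ∀ x ∈ Icc a b, Tendsto (fun n => G n x) atTop (𝓝 (G₀ x))) :
    Tendsto (fun n => ∫ x in Ioc a b, f x ∂(G n).measure) atTop
      (𝓝 (∫ x in Ioc a b, f x ∂G₀.measure)) := by
  rcases lt_or_ge b a with hba | hab
  · simp [Ioc_eq_empty (not_lt.2 hba.le)]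
  -- the weight of `ε` collects the errors of both Riemann–Stieltjes approximations and
  -- the distance between the two sums
  have hc : Tendsto (fun n => (G n b - G n a) + 1 + (G₀ b - G₀ a)) atTop
      (𝓝 ((G₀ b - G₀ a) + 1 + (G₀ b - G₀ a))) :=
    (((hG b ⟨hab, le_rfl⟩).sub (hG a ⟨le_rfl, hab⟩)).add_const _).add_const _
  refine tendsto_of_forall_eventually_dist_le_mul hc.isBoundedUnder_le fun ε hε => ?_
  obtain ⟨m, t, ht, rfl, rfl, hosc⟩ := exists_partition_abs_sub_le hab hf.continuousOn hε
  have hS : Tendsto (fun n => riemannStieltjesSum f (G n) t m) atTop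
      (𝓝 (riemannStieltjesSum f G₀ t m)) := by
    refine tendsto_finsetSum _ fun j hj => ((hG _ ?_).sub (hG _ ?_)).const_mul _
    · exact ⟨ht (Nat.zero_le _), ht (Finset.mem_range.1 hj)⟩
    · exact ⟨ht (Nat.zero_le _), ht (Finset.mem_range.1 hj).le⟩
  filter_upwards [Metric.tendsto_nhds.1 hS ε hε] with n hn
  have hGn := (G n).abs_setIntegral_Ioc_sub_riemannStieltjesSum_le hf ht hosc
  have h₀ := G₀.abs_setIntegral_Ioc_sub_riemannStieltjesSum_le hf ht hosc
  rw [Real.dist_eq] at hn ⊢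
  rw [abs_sub_comm] at h₀
  calc |∫ x in Ioc (t 0) (t m), f x ∂(G n).measure - ∫ x in Ioc (t 0) (t m), f x ∂G₀.measure|
      ≤ |∫ x in Ioc (t 0) (t m), f x ∂(G n).measure - riemannStieltjesSum f (G n) t m|
        + |riemannStieltjesSum f (G n) t m - riemannStieltjesSum f G₀ t m|
        + |riemannStieltjesSum f G₀ t m - ∫ x in Ioc (t 0) (t m), f x ∂G₀.measure| :=
          le_of_eq_of_le (by ring_nf) (abs_add_three _ _ _)
    _ ≤ ε * (G n (t m) - G n (t 0)) + ε + ε * (G₀ (t m) - G₀ (t 0)) := by gcongr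
    _ = ε * ((G n (t m) - G n (t 0)) + 1 + (G₀ (t m) - G₀ (t 0))) := by ring

theorem tendsto_setIntegral_Icc_of_tendsto {f : ℝ → ℝ} (hf : Continuous f) {a b : ℝ}
    {G : ℕ → StieltjesFunction ℝ} {G₀ : StieltjesFunction ℝ} (hGa : ∀ n, ContinuousAt (G n) a)
    (hG₀a : ContinuousAt G₀ a) (hG : ∀ x ∈ Icc a b, Tendsto (fun n => G n x) atTop (𝓝 (G₀ x))) :
    Tendsto (fun n => ∫ x in Icc a b, f x ∂(G n).measure) atTop
      (𝓝 (∫ x in Icc a b, f x ∂G₀.measure)) := by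
  simp_rw [integral_Icc_eq_integral_Ioc' (measure_singleton_of_continuousAt _ (hGa _)),
    integral_Icc_eq_integral_Ioc' (measure_singleton_of_continuousAt _ hG₀a)]
  exact tendsto_setIntegral_Ioc_of_tendsto hf hG

end StieltjesFunction

theorem stmt_10_general (T : ℝ)
    (Y : ℕ → ℝ → ℝ) (K : ℕ → StieltjesFunction ℝ)
    (Ylim : ℝ → ℝ) (Klim : StieltjesFunction ℝ) (L : ℝ → ℝ)
    (hYc : ∀ n, Continuous (Y n)) (hKc : ∀ n, Continuous (K n : ℝ → ℝ))
    (hYlimc : Continuous Ylim) (hKlimc : Continuous (Klim : ℝ → ℝ))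
    (hLc : Continuous L)
    (hYu : TendstoUniformlyOn Y Ylim Filter.atTop (Set.Icc 0 T))
    (hKu : TendstoUniformlyOn (fun n => (K n : ℝ → ℝ)) (Klim : ℝ → ℝ)
      Filter.atTop (Set.Icc 0 T))
    (hge : ∀ n, ∀ s ∈ Set.Icc (0 : ℝ) T, L s ≤ Y n s)
    (hint : ∀ n, ∫ s in Set.Icc (0 : ℝ) T, (Y n s - L s) ∂(K n).measure = 0) :
    (∀ s ∈ Set.Icc (0 : ℝ) T, L s ≤ Ylim s) ∧
    ∫ s in Set.Icc (0 : ℝ) T, (Ylim s - L s) ∂Klim.measure = 0 := by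
  refine ⟨fun s hs => ge_of_tendsto (hYu.tendsto_at hs) (.of_forall fun n => hge n s hs), ?_⟩
  rcases lt_or_ge T 0 with hT | hT
  · simp [Icc_eq_empty_of_lt hT]
  have hHelly := StieltjesFunction.tendsto_setIntegral_Icc_of_tendsto (hYlimc.sub hLc)
    (fun n => (hKc n).continuousAt) hKlimc.continuousAt fun x hx => hKu.tendsto_at hx
  have hmass : Tendsto (fun n => (K n).measure.real (Icc 0 T)) atTop (𝓝 (Klim T - Klim 0)) := by
    simp_rw [StieltjesFunction.measureReal_Icc_of_continuousAt _ hT (hKc _).continuousAt]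
    exact (hKu.tendsto_at ⟨hT, le_rfl⟩).sub (hKu.tendsto_at ⟨le_rfl, hT⟩)
  have hsmall := tendsto_setIntegral_sub_of_tendstoUniformlyOn
    (hYu.fun_sub (fun _ hu => .of_forall fun _ _ _ => refl_mem_uniformity hu))
    (fun n => ((hYc n).sub hLc).integrableOn_Icc) (fun _ => (hYlimc.sub hLc).integrableOn_Icc)
    (fun _ => measure_Icc_lt_top) hmass.isBoundedUnder_le
  simp only [hint, zero_sub] at hsmall
  exact tendsto_nhds_unique hHelly (by simpa using hsmall.neg)

/-- Helly-type convergence: if continuous `Y^n` and continuous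
nondecreasing `K^n` (with `K^n(0)=0`) converge uniformly on `[0,T]` to `Y` and `K`,
`Y^n ≥ L` on `[0,T]` and `∫_0^T (Y^n − L) dK^n = 0` for all `n`, then `Y ≥ L` on `[0,T]`
and `∫_0^T (Y − L) dK = 0`, the integrals being Lebesgue–Stieltjes integrals. -/
theorem stmt_10 (T : ℝ) (hT : 0 < T)
    (Y : ℕ → ℝ → ℝ) (K : ℕ → StieltjesFunction ℝ)
    (Ylim : ℝ → ℝ) (Klim : StieltjesFunction ℝ) (L : ℝ → ℝ)
    (hYc : ∀ n, Continuous (Y n)) (hKc : ∀ n, Continuous (K n : ℝ → ℝ))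
    (hK0 : ∀ n, (K n) 0 = 0)
    (hYlimc : Continuous Ylim) (hKlimc : Continuous (Klim : ℝ → ℝ))
    (hLc : Continuous L)
    (hYu : TendstoUniformlyOn Y Ylim Filter.atTop (Set.Icc 0 T))
    (hKu : TendstoUniformlyOn (fun n => (K n : ℝ → ℝ)) (Klim : ℝ → ℝ)
      Filter.atTop (Set.Icc 0 T))
    (hge : ∀ n, ∀ s ∈ Set.Icc (0 : ℝ) T, L s ≤ Y n s)
    (hint : ∀ n, ∫ s in Set.Icc (0 : ℝ) T, (Y n s - L s) ∂(K n).measure = 0) :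
    (∀ s ∈ Set.Icc (0 : ℝ) T, L s ≤ Ylim s) ∧
    ∫ s in Set.Icc (0 : ℝ) T, (Ylim s - L s) ∂Klim.measure = 0 :=
  stmt_10_general T Y K Ylim Klim L hYc hKc hYlimc hKlimc hLc hYu hKu hge hint
end

section
/- Let v be a continuous viscosity supersolution on [0,T]×ℝ^d of min[v(t,x) − h(t,x), −∂_t v − ℒv − Φ(t,x, ∇_x v σ(t,x))] = 0, v(T,·) ≥ g, where Φ satisfies the one-sided stochastic Lipschitz condition Φ(t,x,z) − Φ(t,x,z') ≥ −C(1+|x|)|z−z'|, σ is bounded by C_σ, and |v(t,x)| ≤ C(1+|x|^{2γ}). Then there exists λ₀ > 0 such that for every λ ≥ λ₀ and every θ > 0, the function v(t,x) + θ e^{−λt}(1+|x|^{2γ+2}) is again a viscosity supersolution of the same obstacle problem. -/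
noncomputable section

open Filter

/-- Euclidean state space. -/
abbrev Evs (d : ℕ) := EuclideanSpace ℝ (Fin d)

/-- `(1/2) Tr[σσᵀ D²_{xx} φ] = (1/2) ∑_i D²φ(x)[σe_i, σe_i]`: the second order operator
`ℒ` applied to a test function `φ`. -/
noncomputable def Lop (d : ℕ) (σ : ℝ → Evs d → (Evs d →L[ℝ] Evs d))
    (φ : ℝ × Evs d → ℝ) (t : ℝ) (x : Evs d) : ℝ :=
  (1 / 2) * ∑ i : Fin d,
    (fderiv ℝ (fun y =>
        (fderiv ℝ (fun y' => φ (t, y')) y) (σ t x (EuclideanSpace.single i 1))) x)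
      (σ t x (EuclideanSpace.single i 1))

/-- The vector `∇_x φ(t,·)(x) σ(t,x)`, i.e. `σ(t,x)ᵀ ∇_x φ`, fed into the Hamiltonian. -/
noncomputable def zArg (d : ℕ) (σ : ℝ → Evs d → (Evs d →L[ℝ] Evs d))
    (φ : ℝ × Evs d → ℝ) (t : ℝ) (x : Evs d) : Evs d :=
  ContinuousLinearMap.adjoint (σ t x) (gradient (fun y => φ (t, y)) x)

/-- Upper semicontinuous envelope. -/
noncomputable def uscEnv {d : ℕ} (v : ℝ × Evs d → ℝ) (p : ℝ × Evs d) : ℝ :=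
  Filter.limsup v (nhds p)

/-- Lower semicontinuous envelope. -/
noncomputable def lscEnv {d : ℕ} (v : ℝ × Evs d → ℝ) (p : ℝ × Evs d) : ℝ :=
  Filter.liminf v (nhds p)

/-- Viscosity subsolution (via `C^{1,2}` test functions and the usc envelope) of
`min[v − obst, −∂_t v − ℒv − ham(t,x,v,∇_x v σ)] = 0` on `[0,T)×ℝ^d` with terminal
condition `v(T,·) ≤ g`. -/
def IsViscositySubsol (d : ℕ) (T : ℝ) (σ : ℝ → Evs d → (Evs d →L[ℝ] Evs d))
    (obst : ℝ → Evs d → ℝ) (ham : ℝ → Evs d → ℝ → Evs d → ℝ) (g : Evs d → ℝ)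
    (v : ℝ × Evs d → ℝ) : Prop :=
  (∀ x, uscEnv v (T, x) ≤ g x) ∧
  ∀ (t : ℝ) (x : Evs d), t ∈ Set.Ico (0 : ℝ) T →
    ∀ φ : ℝ × Evs d → ℝ, ContDiff ℝ 2 φ →
      IsLocalMax (fun p => uscEnv v p - φ p) (t, x) →
      min (uscEnv v (t, x) - obst t x)
        (-(deriv (fun s => φ (s, x)) t) - Lop d σ φ t x -
          ham t x (uscEnv v (t, x)) (zArg d σ φ t x)) ≤ 0

/-- Viscosity supersolution (via `C^{1,2}` test functions and the lsc envelope). -/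
def IsViscositySupersol (d : ℕ) (T : ℝ) (σ : ℝ → Evs d → (Evs d →L[ℝ] Evs d))
    (obst : ℝ → Evs d → ℝ) (ham : ℝ → Evs d → ℝ → Evs d → ℝ) (g : Evs d → ℝ)
    (v : ℝ × Evs d → ℝ) : Prop :=
  (∀ x, g x ≤ lscEnv v (T, x)) ∧
  ∀ (t : ℝ) (x : Evs d), t ∈ Set.Ico (0 : ℝ) T →
    ∀ φ : ℝ × Evs d → ℝ, ContDiff ℝ 2 φ →
      IsLocalMin (fun p => lscEnv v p - φ p) (t, x) →
      0 ≤ min (lscEnv v (t, x) - obst t x)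
        (-(deriv (fun s => φ (s, x)) t) - Lop d σ φ t x -
          ham t x (lscEnv v (t, x)) (zArg d σ φ t x))


/-! The perturbation `F(t,x) = θ e^{-λt} (1 + ‖x‖^{2γ+2})` is smooth and nonnegative, so a test
function `φ` touching `v + F` from below yields the test function `φ - F` touching `v` from below.
The operator is additive in the test function except for the Hamiltonian, and the one-sided
Lipschitz bound on `Φ` reduces everything to the classical inequality
`∂ₜF + ℒF + C(1+‖x‖)‖σᵀ∇F‖ ≤ 0`. There `∂ₜF = -λF`, while `ℒF` and `σᵀ∇F` are bounded by
`θe^{-λt}` times multiples of `‖x‖^{2γ}` and `‖x‖^{2γ+1}`, both dominated by `1 + ‖x‖^{2γ+2}`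
once `λ` is large. -/

lemma pow_le_one_add_pow {r : ℝ} (hr : 0 ≤ r) {k m : ℕ} (hkm : k ≤ m) : r ^ k ≤ 1 + r ^ m := by
  rcases le_total r 1 with h | h
  · linarith [pow_le_one₀ hr h (n := k), pow_nonneg hr m]
  · linarith [pow_le_pow_right₀ h hkm]

lemma mul_pow_add_mul_pow_succ_le {A B lam r : ℝ} (γ : ℕ) (hA : 0 ≤ A) (hB : 0 ≤ B)
    (hr : 0 ≤ r) (hlam : A + 2 * B ≤ lam) :
    A * r ^ (2 * γ) + B * ((1 + r) * r ^ (2 * γ + 1)) ≤ lam * (1 + r ^ (2 * γ + 2)) := by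
  have h₀ := pow_le_one_add_pow hr (by omega : 2 * γ ≤ 2 * γ + 2)
  have h₁ := pow_le_one_add_pow hr (by omega : 2 * γ + 1 ≤ 2 * γ + 2)
  calc A * r ^ (2 * γ) + B * ((1 + r) * r ^ (2 * γ + 1))
      = A * r ^ (2 * γ) + B * (r ^ (2 * γ + 1) + r ^ (2 * γ + 2)) := by ring
    _ ≤ A * (1 + r ^ (2 * γ + 2)) + B * ((1 + r ^ (2 * γ + 2)) + (1 + r ^ (2 * γ + 2))) := by
        gcongr
        linarith
    _ = (A + 2 * B) * (1 + r ^ (2 * γ + 2)) := by ring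
    _ ≤ lam * (1 + r ^ (2 * γ + 2)) := by gcongr

lemma lscEnv_eq_of_continuous {d : ℕ} {v : ℝ × Evs d → ℝ} (hv : Continuous v) :
    lscEnv v = v :=
  funext fun p => (hv.tendsto p).liminf_eq

section SecondDerivative

variable {E : Type*} [NormedAddCommGroup E] [NormedSpace ℝ E] {f g : E → ℝ}

lemma ContDiff.differentiableAt_fderiv_apply (hf : ContDiff ℝ 2 f) (u x : E) :
    DifferentiableAt ℝ (fun y => fderiv ℝ f y u) x :=
  ((hf.fderiv_right (m := 1) (by norm_num)).differentiable one_ne_zero x).clm_apply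
    (differentiableAt_const u)

lemma fderiv_fderiv_add_apply (hf : ContDiff ℝ 2 f) (hg : ContDiff ℝ 2 g) (x u w : E) :
    fderiv ℝ (fun y => fderiv ℝ (fun z => f z + g z) y u) x w =
      fderiv ℝ (fun y => fderiv ℝ f y u) x w + fderiv ℝ (fun y => fderiv ℝ g y u) x w := by
  have hsplit : (fun y => fderiv ℝ (fun z => f z + g z) y u) =
      fun y => fderiv ℝ f y u + fderiv ℝ g y u := by
    funext y
    rw [fderiv_fun_add (hf.differentiable two_ne_zero y) (hg.differentiable two_ne_zero y)]
    rfl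
  rw [hsplit, fderiv_fun_add (hf.differentiableAt_fderiv_apply u x)
    (hg.differentiableAt_fderiv_apply u x)]
  rfl

lemma fderiv_fderiv_const_mul_apply (hf : ContDiff ℝ 2 f) (c : ℝ) (x u w : E) :
    fderiv ℝ (fun y => fderiv ℝ (fun z => c * f z) y u) x w =
      c * fderiv ℝ (fun y => fderiv ℝ f y u) x w := by
  have hsplit : (fun y => fderiv ℝ (fun z => c * f z) y u) = fun y => c * fderiv ℝ f y u := by
    funext y
    rw [fderiv_const_mul (hf.differentiable two_ne_zero y)]
    rfl
  rw [hsplit, fderiv_const_mul (hf.differentiableAt_fderiv_apply u x)]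
  rfl

end SecondDerivative

lemma ContDiff.slice {d : ℕ} {φ : ℝ × Evs d → ℝ} {n : WithTop ℕ∞} (hφ : ContDiff ℝ n φ) (t : ℝ) :
    ContDiff ℝ n fun y : Evs d => φ (t, y) :=
  hφ.comp (contDiff_const.prodMk contDiff_id)

section Operators

variable {d : ℕ} (σ : ℝ → Evs d → (Evs d →L[ℝ] Evs d)) {φ ψ : ℝ × Evs d → ℝ} (t : ℝ) (x : Evs d)

lemma Lop_add (hφ : ContDiff ℝ 2 φ) (hψ : ContDiff ℝ 2 ψ) :
    Lop d σ (φ + ψ) t x = Lop d σ φ t x + Lop d σ ψ t x := by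
  simp only [Lop, ← mul_add, ← Finset.sum_add_distrib]
  congr 1
  refine Finset.sum_congr rfl fun i _ => ?_
  exact fderiv_fderiv_add_apply (hφ.slice t) (hψ.slice t) x _ _

lemma zArg_add (hφ : Differentiable ℝ φ) (hψ : Differentiable ℝ ψ) :
    zArg d σ (φ + ψ) t x = zArg d σ φ t x + zArg d σ ψ t x := by
  have hφt : DifferentiableAt ℝ (fun y : Evs d => φ (t, y)) x :=
    (hφ.comp (differentiable_const t |>.prodMk differentiable_id)) x
  have hψt : DifferentiableAt ℝ (fun y : Evs d => ψ (t, y)) x :=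
    (hψ.comp (differentiable_const t |>.prodMk differentiable_id)) x
  simp only [zArg, gradient, Pi.add_apply, fderiv_fun_add hφt hψt, map_add]

variable {σ}

lemma abs_Lop_le {Cσ M : ℝ} (hσ : ‖σ t x‖ ≤ Cσ) (hM : 0 ≤ M)
    (hφ : ∀ u, |fderiv ℝ (fun y => fderiv ℝ (fun y' => φ (t, y')) y u) x u| ≤ M * ‖u‖ ^ 2) :
    |Lop d σ φ t x| ≤ d * M * Cσ ^ 2 / 2 := by
  have hcol : ∀ i : Fin d, ‖σ t x (EuclideanSpace.single i 1)‖ ≤ Cσ := fun i =>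
    ((σ t x).le_opNorm _).trans (by simpa using hσ)
  calc |Lop d σ φ t x|
      ≤ 1 / 2 * ∑ i : Fin d, |fderiv ℝ (fun y => fderiv ℝ (fun y' => φ (t, y')) y
          (σ t x (EuclideanSpace.single i 1))) x (σ t x (EuclideanSpace.single i 1))| := by
        rw [Lop, abs_mul, abs_of_pos (by norm_num : (0 : ℝ) < 1 / 2)]
        gcongr
        exact Finset.abs_sum_le_sum_abs _ _
    _ ≤ 1 / 2 * ∑ _i : Fin d, M * Cσ ^ 2 := by
        gcongr with i
        exact (hφ _).trans (by gcongr; exact hcol i)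
    _ = d * M * Cσ ^ 2 / 2 := by simp; ring

lemma norm_zArg_le {Cσ : ℝ} (hσ : ‖σ t x‖ ≤ Cσ) :
    ‖zArg d σ φ t x‖ ≤ Cσ * ‖gradient (fun y => φ (t, y)) x‖ :=
  ((σ t x).adjoint.le_opNorm _).trans <| by
    gcongr
    rw [ContinuousLinearMap.adjoint.norm_map]
    exact hσ

end Operators

section Penalty

variable {E : Type*} [NormedAddCommGroup E]

def penalty (γ : ℕ) (x : E) : ℝ := 1 + ‖x‖ ^ (2 * γ + 2)

lemma penalty_eq_one_add_norm_sq_pow (γ : ℕ) :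
    (penalty γ : E → ℝ) = fun x => 1 + (‖x‖ ^ 2) ^ (γ + 1) := by
  funext x
  rw [penalty, ← pow_mul]
  ring_nf

variable [InnerProductSpace ℝ E]

lemma contDiff_penalty (γ : ℕ) {n : WithTop ℕ∞} : ContDiff ℝ n (penalty γ : E → ℝ) := by
  rw [penalty_eq_one_add_norm_sq_pow]
  exact contDiff_const.add (contDiff_norm_sq ℝ |>.pow _)

lemma hasFDerivAt_penalty (γ : ℕ) (y : E) :
    HasFDerivAt (penalty γ) (((2 * γ + 2) * (‖y‖ ^ 2) ^ γ) • innerSL ℝ y) y := by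
  rw [penalty_eq_one_add_norm_sq_pow]
  refine ((hasFDerivAt_id y).norm_sq.pow (γ + 1)).const_add 1 |>.congr_fderiv ?_
  ext u
  simp
  ring

lemma fderiv_penalty_apply (γ : ℕ) (y u : E) :
    fderiv ℝ (penalty γ) y u = (2 * γ + 2) * ((‖y‖ ^ 2) ^ γ * inner ℝ y u) := by
  rw [(hasFDerivAt_penalty γ y).fderiv]
  simp
  ring

lemma gradient_const_mul_penalty [CompleteSpace E] (c : ℝ) (γ : ℕ) (y : E) :
    gradient (fun z => c * penalty γ z) y = (c * ((2 * γ + 2) * (‖y‖ ^ 2) ^ γ)) • y := by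
  refine (hasGradientAt_iff_hasFDerivAt.2 ?_).gradient
  refine ((hasFDerivAt_penalty γ y).const_mul c).congr_fderiv ?_
  ext u
  simp
  ring

lemma fderiv_fderiv_penalty_apply (γ : ℕ) (x u w : E) :
    fderiv ℝ (fun y => fderiv ℝ (penalty γ) y u) x w =
      (2 * γ + 2) * ((‖x‖ ^ 2) ^ γ * inner ℝ w u +
        γ * (‖x‖ ^ 2) ^ (γ - 1) * (2 * inner ℝ x w) * inner ℝ x u) := by
  have hinner : HasFDerivAt (fun y : E => inner ℝ y u) (innerSL ℝ u) x :=
    ((innerSL ℝ u).hasFDerivAt).congr_of_eventuallyEq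
      (Eventually.of_forall fun y => real_inner_comm u y)
  simp_rw [fderiv_penalty_apply]
  have hnorm := (hasStrictFDerivAt_norm_sq x).hasFDerivAt
  rw [((hnorm.pow γ).fun_mul hinner |>.const_mul (2 * γ + 2)).fderiv]
  simp [real_inner_comm]
  ring

lemma abs_fderiv_fderiv_penalty_apply_le (γ : ℕ) (x u : E) :
    |fderiv ℝ (fun y => fderiv ℝ (penalty γ) y u) x u| ≤
      (2 * γ + 2) * (2 * γ + 1) * ‖x‖ ^ (2 * γ) * ‖u‖ ^ 2 := by
  rw [fderiv_fderiv_penalty_apply, real_inner_self_eq_norm_sq, pow_mul]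
  have hcs : inner ℝ x u ^ 2 ≤ ‖x‖ ^ 2 * ‖u‖ ^ 2 := by
    simpa [mul_pow, sq_abs] using pow_le_pow_left₀ (abs_nonneg _) (abs_real_inner_le_norm x u) 2
  rcases γ with _ | γ
  · simp
  · have hform : ((γ + 1 : ℕ) : ℝ) * (‖x‖ ^ 2) ^ (γ + 1 - 1) * (2 * inner ℝ x u) * inner ℝ x u =
        2 * (γ + 1) * ((‖x‖ ^ 2) ^ γ * inner ℝ x u ^ 2) := by
      rw [Nat.add_sub_cancel]
      push_cast
      ring
    rw [hform, abs_of_nonneg (by positivity)]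
    calc (2 * ((γ + 1 : ℕ) : ℝ) + 2) * ((‖x‖ ^ 2) ^ (γ + 1) * ‖u‖ ^ 2 +
          2 * (γ + 1) * ((‖x‖ ^ 2) ^ γ * inner ℝ x u ^ 2))
        ≤ (2 * ((γ + 1 : ℕ) : ℝ) + 2) * ((‖x‖ ^ 2) ^ (γ + 1) * ‖u‖ ^ 2 +
          2 * (γ + 1) * ((‖x‖ ^ 2) ^ γ * (‖x‖ ^ 2 * ‖u‖ ^ 2))) := by gcongr
      _ = _ := by push_cast; ring

end Penalty

lemma IsViscositySupersol.add {d : ℕ} {T C : ℝ} {σ : ℝ → Evs d → (Evs d →L[ℝ] Evs d)}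
    {Φ : ℝ → Evs d → Evs d → ℝ} {h : ℝ → Evs d → ℝ} {g : Evs d → ℝ} {v F : ℝ × Evs d → ℝ}
    (hsup : IsViscositySupersol d T σ h (fun t x _ z => Φ t x z) g v) (hv : Continuous v)
    (hΦ : ∀ t x z z', Φ t x z - Φ t x z' ≥ -(C * (1 + ‖x‖) * ‖z - z'‖))
    (hF : ContDiff ℝ 2 F) (hF₀ : ∀ p, 0 ≤ F p)
    (hFsup : ∀ t x, deriv (fun s => F (s, x)) t + Lop d σ F t x +
      C * (1 + ‖x‖) * ‖zArg d σ F t x‖ ≤ 0) :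
    IsViscositySupersol d T σ h (fun t x _ z => Φ t x z) g (v + F) := by
  obtain ⟨hterminal, hvisc⟩ := hsup
  have hlv := lscEnv_eq_of_continuous hv
  have hlw := lscEnv_eq_of_continuous (hv.add hF.continuous)
  refine ⟨fun x => ?_, fun t x ht φ hφ hmin => ?_⟩
  · have := hterminal x
    rw [hlv] at this
    rw [hlw, Pi.add_apply]
    linarith [hF₀ (T, x)]
  obtain ⟨ψ, rfl⟩ : ∃ ψ, φ = ψ + F := ⟨φ - F, (sub_add_cancel φ F).symm⟩
  have hψ : ContDiff ℝ 2 ψ := by simpa using hφ.sub hF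
  have hmin' : IsLocalMin (fun p => lscEnv v p - ψ p) (t, x) := by
    simpa [hlv, hlw] using hmin
  obtain ⟨hobst, hpde⟩ := le_min_iff.1 (hvisc t x ht ψ hψ hmin')
  have hdiff (φ : ℝ × Evs d → ℝ) (hφ : ContDiff ℝ 2 φ) :
      DifferentiableAt ℝ (fun s => φ (s, x)) t :=
    (hφ.differentiable two_ne_zero _).comp t (differentiableAt_id.prodMk (differentiableAt_const x))
  have hΦz := hΦ t x (zArg d σ ψ t x) (zArg d σ ψ t x + zArg d σ F t x)
  rw [sub_add_cancel_left, norm_neg] at hΦz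
  simp only [hlv, hlw, Pi.add_apply] at hobst hpde ⊢
  refine le_min_iff.2 ⟨by linarith [hF₀ (t, x)], ?_⟩
  rw [deriv_fun_add (hdiff ψ hψ) (hdiff F hF), Lop_add σ t x hψ hF,
    zArg_add σ t x (hψ.differentiable two_ne_zero) (hF.differentiable two_ne_zero)]
  linarith [hFsup t x]

def expPenalty {E : Type*} [NormedAddCommGroup E] (θ lam : ℝ) (γ : ℕ) (p : ℝ × E) : ℝ :=
  θ * Real.exp (-lam * p.1) * penalty γ p.2

lemma contDiff_expPenalty {E : Type*} [NormedAddCommGroup E] [InnerProductSpace ℝ E]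
    (θ lam : ℝ) (γ : ℕ) {n : WithTop ℕ∞} : ContDiff ℝ n (expPenalty θ lam γ : ℝ × E → ℝ) :=
  (contDiff_const.mul (Real.contDiff_exp.comp (contDiff_const.mul contDiff_fst))).mul
    ((contDiff_penalty γ).comp contDiff_snd)

lemma expPenalty_supersol {d : ℕ} {σ : ℝ → Evs d → (Evs d →L[ℝ] Evs d)} {C Cσ θ lam : ℝ}
    (γ : ℕ) (hC : 0 ≤ C) (hCσ : 0 ≤ Cσ) (hθ : 0 ≤ θ) (hσ : ∀ t x, ‖σ t x‖ ≤ Cσ)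
    (hlam : d * Cσ ^ 2 * ((2 * γ + 2) * (2 * γ + 1)) / 2 + 2 * (C * Cσ * (2 * γ + 2)) ≤ lam)
    (t : ℝ) (x : Evs d) :
    deriv (fun s => expPenalty θ lam γ (s, x)) t + Lop d σ (expPenalty θ lam γ) t x +
      C * (1 + ‖x‖) * ‖zArg d σ (expPenalty θ lam γ) t x‖ ≤ 0 := by
  set c := θ * Real.exp (-lam * t)
  have hc : 0 ≤ c := by positivity
  have hderiv : deriv (fun s => expPenalty θ lam γ (s, x)) t = -lam * (c * penalty γ x) := by
    refine ((((hasDerivAt_id t).const_mul (-lam)).exp.const_mul θ).mul_const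
      (penalty γ x)).deriv.trans ?_
    simp only [c, id]
    ring
  have hslice : (fun y : Evs d => expPenalty θ lam γ (t, y)) = fun y => c * penalty γ y := rfl
  have hLop : Lop d σ (expPenalty θ lam γ) t x ≤
      c * (d * Cσ ^ 2 * ((2 * γ + 2) * (2 * γ + 1)) / 2 * ‖x‖ ^ (2 * γ)) := by
    refine (le_abs_self _).trans <| (abs_Lop_le t x (hσ t x)
      (M := c * ((2 * γ + 2) * (2 * γ + 1)) * ‖x‖ ^ (2 * γ)) (by positivity) fun u => ?_).trans_eq
      (by ring)
    rw [hslice, fderiv_fderiv_const_mul_apply (contDiff_penalty γ), abs_mul, abs_of_nonneg hc]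
    exact (mul_le_mul_of_nonneg_left (abs_fderiv_fderiv_penalty_apply_le γ x u) hc).trans_eq
      (by ring)
  have hzArg :
      ‖zArg d σ (expPenalty θ lam γ) t x‖ ≤ c * (Cσ * (2 * γ + 2)) * ‖x‖ ^ (2 * γ + 1) := by
    refine (norm_zArg_le (φ := expPenalty θ lam γ) t x (hσ t x)).trans_eq ?_
    rw [hslice, gradient_const_mul_penalty, norm_smul, Real.norm_of_nonneg (by positivity),
      ← pow_mul, pow_succ]
    ring
  have hdrift : C * (1 + ‖x‖) * ‖zArg d σ (expPenalty θ lam γ) t x‖ ≤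
      C * (1 + ‖x‖) * (c * (Cσ * (2 * γ + 2)) * ‖x‖ ^ (2 * γ + 1)) := by gcongr
  have hpoly := mul_le_mul_of_nonneg_left
    (mul_pow_add_mul_pow_succ_le γ (by positivity) (by positivity) (norm_nonneg x) hlam) hc
  rw [hderiv, penalty]
  linear_combination hLop + hdrift + hpoly

theorem stmt_12_general (d γ : ℕ) (T C Cσ : ℝ) (hC : 0 < C) (hCσ : 0 < Cσ)
    (σ : ℝ → Evs d → (Evs d →L[ℝ] Evs d))
    (hσb : ∀ t x, ‖σ t x‖ ≤ Cσ)
    (Φ : ℝ → Evs d → Evs d → ℝ)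
    (hΦ : ∀ t x z z', Φ t x z - Φ t x z' ≥ -(C * (1 + ‖x‖) * ‖z - z'‖))
    (h : ℝ → Evs d → ℝ) (g : Evs d → ℝ)
    (v : ℝ × Evs d → ℝ) (hvc : Continuous v)
    (hsup : IsViscositySupersol d T σ h (fun t x _ z => Φ t x z) g v) :
    ∃ lam₀ > (0 : ℝ), ∀ lam ≥ lam₀, ∀ θ > (0 : ℝ),
      IsViscositySupersol d T σ h (fun t x _ z => Φ t x z) g
        (fun p => v p + θ * Real.exp (-lam * p.1) * (1 + ‖p.2‖ ^ (2 * γ + 2))) := by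
  refine ⟨d * Cσ ^ 2 * ((2 * γ + 2) * (2 * γ + 1)) / 2 + 2 * (C * Cσ * (2 * γ + 2)),
    by positivity, fun lam hlam θ hθ => ?_⟩
  exact hsup.add hvc hΦ (contDiff_expPenalty θ lam γ) (fun _ => by positivity)
    (expPenalty_supersol γ hC.le hCσ.le hθ.le hσb hlam)

/-- if `v` is a continuous viscosity supersolution of the obstacle problem
`min[v − h, −∂_t v − ℒv − Φ(t,x,∇_x v σ)] = 0`, `v(T,·) ≥ g`, where `Φ` satisfies the
one-sided stochastic Lipschitz condition `Φ(t,x,z) − Φ(t,x,z') ≥ −C(1+‖x‖)‖z−z'‖`, `σ`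
is bounded by `C_σ` and `|v(t,x)| ≤ C_g(1+‖x‖^{2γ})`, then there is `λ₀ > 0` such that
for all `λ ≥ λ₀` and `θ > 0`, `v(t,x) + θe^{−λt}(1+‖x‖^{2γ+2})` is again a viscosity
supersolution of the same problem. -/
theorem stmt_12 (d γ : ℕ) (T C Cσ Cg : ℝ) (hT : 0 < T) (hC : 0 < C) (hCσ : 0 < Cσ)
    (hCg : 0 < Cg)
    (σ : ℝ → Evs d → (Evs d →L[ℝ] Evs d))
    (hσb : ∀ t x, ‖σ t x‖ ≤ Cσ)
    (Φ : ℝ → Evs d → Evs d → ℝ)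
    (hΦ : ∀ t x z z', Φ t x z - Φ t x z' ≥ -(C * (1 + ‖x‖) * ‖z - z'‖))
    (h : ℝ → Evs d → ℝ) (g : Evs d → ℝ)
    (v : ℝ × Evs d → ℝ) (hvc : Continuous v)
    (hvg : ∀ t (x : Evs d), |v (t, x)| ≤ Cg * (1 + ‖x‖ ^ (2 * γ)))
    (hsup : IsViscositySupersol d T σ h (fun t x _ z => Φ t x z) g v) :
    ∃ lam₀ > (0 : ℝ), ∀ lam ≥ lam₀, ∀ θ > (0 : ℝ),
      IsViscositySupersol d T σ h (fun t x _ z => Φ t x z) g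
        (fun p => v p + θ * Real.exp (-lam * p.1) * (1 + ‖p.2‖ ^ (2 * γ + 2))) :=
  stmt_12_general d γ T C Cσ hC hCσ σ hσb Φ hΦ h g v hvc hsup

end
end
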